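/- arXiv:1103.5908 — 4 statements merged into one kernel-verified Lean document; each statement's English description precedes it below -/
import Mathlib

section
/- Let Z be a metric space, 0 < r ≤ 1/6, and for k ∈ ℤ let X_k = RipsG_{r^k}(Z) be the Rips graph on Z with edges between points at distance ≤ r^k. Form the graph X = RH(Z) with vertex set the disjoint union of copies x^k of points x ∈ Z for k ∈ ℤ, horizontal edges [x^k, y^k] when d_Z(x,y) ≤ r^k, and radial edges [x^k, y^{k+1}] when d_Z(x,y) ≤ r^k. Then for any two vertices x^k, x'^{k'} of X there exists a vertex y at level m ≤ min(k, k') such that both x^k and x'^{k'} are connected to y by radial geodesics (paths using only radial edges, one per level). In particular X is connected. -/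
/-- Adjacency in the Rips hyperbolic approximation `RH(Z)`: two distinct vertices are
adjacent iff their levels differ by at most 1 and the distance of the underlying points
is at most `r` to the power of the lower of the two levels (this encodes both the
horizontal and the radial edges). -/
def RHAdj {Z : Type*} [MetricSpace Z] (r : ℝ) (v w : Z × ℤ) : Prop :=
  v ≠ w ∧ |v.2 - w.2| ≤ 1 ∧ dist v.1 w.1 ≤ r ^ (min v.2 w.2)

/-- The Rips hyperbolic approximation graph `RH(Z)`. -/
def RHGraph (Z : Type*) [MetricSpace Z] (r : ℝ) : SimpleGraph (Z × ℤ) where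
  Adj := RHAdj r
  symm := by
    constructor
    rintro v w ⟨h1, h2, h3⟩
    exact ⟨h1.symm, by rwa [abs_sub_comm], by rwa [min_comm, dist_comm]⟩
  loopless := by constructor; rintro v ⟨h1, -⟩; exact h1 rfl

/-- A radial chain in `RH(Z)` from `v` down to `y`: each step goes down exactly one
level along a radial edge. -/
def RadialChain {Z : Type*} [MetricSpace Z] (r : ℝ) (v y : Z × ℤ) : Prop :=
  ∃ (n : ℕ) (c : ℕ → Z × ℤ), c 0 = v ∧ c n = y ∧
    ∀ i < n, (c (i + 1)).2 = (c i).2 - 1 ∧ dist (c i).1 (c (i + 1)).1 ≤ r ^ (c (i + 1)).2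

/-! Any two points of `Z` are `r ^ m`-close for `m` low enough (as `r < 1`). Both vertices then
descend vertically to level `m`, one of them crossing to the other's point on its last radial
edge; the two radial chains together connect the vertices in `RH(Z)`. -/

lemma exists_lt_le_zpow_of_lt_one {K : Type*} [Field K] [LinearOrder K] [IsStrictOrderedRing K]
    [Archimedean K] {r : K} (hr : 0 < r) (hr1 : r < 1) (d : K) (k : ℤ) :
    ∃ m < k, d ≤ r ^ m := by
  obtain ⟨n, hn⟩ := pow_unbounded_of_one_lt d ((one_lt_inv₀ hr).2 hr1)
  refine ⟨min (k - 1) (-n), by omega, ?_⟩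
  calc d ≤ r⁻¹ ^ n := hn.le
    _ = r ^ (-n : ℤ) := by rw [zpow_neg, zpow_natCast, inv_pow]
    _ ≤ r ^ min (k - 1) (-n : ℤ) := zpow_le_zpow_right_of_le_one₀ hr hr1.le (min_le_right _ _)

section RadialChain

variable {Z : Type*} [MetricSpace Z] {r : ℝ}

lemma radialChain_of_dist_le (hr : 0 ≤ r) {x x' : Z} {k m : ℤ} (hm : m < k)
    (hd : dist x x' ≤ r ^ m) : RadialChain r (x, k) (x', m) := by
  refine ⟨(k - m).toNat, fun i => (if (i : ℤ) < k - m then x else x', k - i), ?_, ?_, ?_⟩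
  · simp [hm]
  · simp [Int.toNat_of_nonneg (sub_nonneg.2 hm.le)]
  · intro i hi
    have hi' : (i : ℤ) < k - m := Int.lt_toNat.mp hi
    refine ⟨by push_cast; ring, ?_⟩
    dsimp only
    rw [if_pos hi']
    push_cast
    by_cases hlast : (i : ℤ) + 1 < k - m
    · rw [if_pos hlast, dist_self]; exact zpow_nonneg hr _
    · rwa [if_neg hlast, show k - ((i : ℤ) + 1) = m by omega]

lemma RadialChain.reachable {v y : Z × ℤ} (h : RadialChain r v y) :
    (RHGraph Z r).Reachable v y := by
  obtain ⟨n, c, rfl, rfl, hstep⟩ := h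
  induction n with
  | zero => rfl
  | succ n ih =>
    refine (ih fun i hi => hstep i (by omega)).trans (SimpleGraph.Adj.reachable ?_)
    obtain ⟨hlevel, hd⟩ := hstep n (by omega)
    refine ⟨fun he => by rw [he] at hlevel; omega, by rw [hlevel]; simp, ?_⟩
    rwa [min_eq_right (by omega)]

lemma exists_common_radialChain (hr : 0 < r) (hr1 : r < 1) (v w : Z × ℤ) :
    ∃ y : Z × ℤ, y.2 ≤ min v.2 w.2 ∧ RadialChain r v y ∧ RadialChain r w y := by
  obtain ⟨m, hm, hd⟩ := exists_lt_le_zpow_of_lt_one hr hr1 (dist v.1 w.1) (min v.2 w.2)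
  refine ⟨(w.1, m), hm.le, radialChain_of_dist_le hr.le (by omega) hd,
    radialChain_of_dist_le hr.le (by omega) ?_⟩
  rw [dist_self]
  exact zpow_nonneg hr.le _

end RadialChain

/-- For any two vertices of `RH(Z)` there exists a vertex `y` at a level
`m ≤ min` of the two levels to which both are connected by radial geodesics;
in particular `RH(Z)` is connected. -/
theorem stmt8 {Z : Type*} [MetricSpace Z] [Nonempty Z] (r : ℝ) (hr : 0 < r)
    (hr6 : r ≤ 1 / 6) :
    (∀ v w : Z × ℤ, ∃ y : Z × ℤ, y.2 ≤ min v.2 w.2 ∧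
      RadialChain r v y ∧ RadialChain r w y) ∧
    (RHGraph Z r).Connected := by
  have common := exists_common_radialChain (Z := Z) hr (by linarith)
  refine ⟨common, ⟨fun v w => ?_⟩⟩
  obtain ⟨y, -, hv, hw⟩ := common v w
  exact hv.reachable.trans hw.reachable.symm
end

section
/- A metric space quasi-isometric to a metric space satisfying the Bottleneck Property (for geodesic spaces with midpoints) is Gromov hyperbolic; in particular, any geodesic metric space quasi-isometric to a simplicial tree is Gromov δ-hyperbolic for some δ ≥ 0. -/
/-!
In `T`, the bottleneck property forces every set joining the endpoints of a geodesic to pass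
`3Δ`-close to each of its points. The image under `f` of a geodesic of `X` can be followed,
within `l + C`, by a path of `T`; comparing such paths with geodesics of `T` through a
connectedness argument along a geodesic tripod gives a Morse lemma, and pulling back along `f`
shows that geodesic triangles of `X` are uniformly slim. Finally, in a geodesic space with
`δ`-slim triangles, connectedness of `[x, y]` provides a point close to both `[x, w]` and
`[y, w]`, which realises the Gromov product `(x | y)_w` up to `2δ` and gives the four-point
condition with constant `6δ`.
-/

def GeodesicMetricSpace (X : Type*) [MetricSpace X] : Prop :=
  ∀ x y : X, ∃ γ : ℝ → X, γ 0 = x ∧ γ (dist x y) = y ∧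
    ∀ s ∈ Set.Icc 0 (dist x y), ∀ t ∈ Set.Icc 0 (dist x y), dist (γ s) (γ t) = |s - t|

/-- The Bottleneck Property of Manning. -/
def BottleneckProperty (T : Type*) [MetricSpace T] : Prop :=
  ∃ Δ > (0:ℝ), ∀ x y : T, ∃ m : T,
    dist x m = dist x y / 2 ∧ dist y m = dist x y / 2 ∧
    ∀ γ : ℝ → T, ContinuousOn γ (Set.Icc 0 1) → γ 0 = x → γ 1 = y →
      ∃ t ∈ Set.Icc (0:ℝ) 1, dist (γ t) m ≤ Δ

open Set Metric

section Geodesics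

variable {X : Type*} [MetricSpace X]

def IsGeodesicOn (g : ℝ → X) (d : ℝ) : Prop :=
  ∀ s ∈ Icc 0 d, ∀ t ∈ Icc 0 d, dist (g s) (g t) = |s - t|

def IsGeodesicBetween (g : ℝ → X) (x y : X) : Prop :=
  g 0 = x ∧ g (dist x y) = y ∧ IsGeodesicOn g (dist x y)

namespace IsGeodesicOn

variable {g : ℝ → X} {d : ℝ}

theorem continuousOn (hg : IsGeodesicOn g d) : ContinuousOn g (Icc 0 d) :=
  (LipschitzOnWith.of_dist_le_mul (K := 1) fun s hs t ht => by
    simp [hg s hs t ht, Real.dist_eq]).continuousOn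

theorem dist_of_le (hg : IsGeodesicOn g d) {s t : ℝ} (hs : 0 ≤ s) (hst : s ≤ t) (ht : t ≤ d) :
    dist (g s) (g t) = t - s := by
  rw [hg s ⟨hs, hst.trans ht⟩ t ⟨hs.trans hst, ht⟩, abs_of_nonpos (by linarith)]
  ring

theorem joinedIn_image {a b : ℝ} (hg : IsGeodesicOn g d) (ha : 0 ≤ a) (hab : a ≤ b)
    (hb : b ≤ d) : JoinedIn (g '' Icc a b) (g a) (g b) :=
  ((convex_Icc a b).isPathConnected (nonempty_Icc.2 hab)).image'
    (hg.continuousOn.mono (Icc_subset_Icc ha hb)) |>.joinedIn _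
    (mem_image_of_mem g (left_mem_Icc.2 hab)) _ (mem_image_of_mem g (right_mem_Icc.2 hab))

theorem comp_sub (hg : IsGeodesicOn g d) : IsGeodesicOn (fun t => g (d - t)) d := by
  intro s hs t ht
  rw [hg _ ⟨by linarith [hs.2], by linarith [hs.1]⟩ _ ⟨by linarith [ht.2], by linarith [ht.1]⟩,
    abs_sub_comm]
  ring_nf

end IsGeodesicOn

namespace IsGeodesicBetween

variable {g : ℝ → X} {x y : X}

theorem isCompact_image (hg : IsGeodesicBetween g x y) : IsCompact (g '' Icc 0 (dist x y)) :=
  isCompact_Icc.image_of_continuousOn hg.2.2.continuousOn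

theorem isPreconnected_image (hg : IsGeodesicBetween g x y) :
    IsPreconnected (g '' Icc 0 (dist x y)) :=
  isPreconnected_Icc.image _ hg.2.2.continuousOn

theorem left_mem_image (hg : IsGeodesicBetween g x y) : x ∈ g '' Icc 0 (dist x y) :=
  ⟨0, left_mem_Icc.2 dist_nonneg, hg.1⟩

theorem right_mem_image (hg : IsGeodesicBetween g x y) : y ∈ g '' Icc 0 (dist x y) :=
  ⟨dist x y, right_mem_Icc.2 dist_nonneg, hg.2.1⟩

theorem joinedIn_image (hg : IsGeodesicBetween g x y) : JoinedIn (g '' Icc 0 (dist x y)) x y := by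
  simpa only [hg.1, hg.2.1] using hg.2.2.joinedIn_image le_rfl dist_nonneg le_rfl

theorem dist_add_dist {q : X} (hg : IsGeodesicBetween g x y) (hq : q ∈ g '' Icc 0 (dist x y)) :
    dist x q + dist q y = dist x y := by
  obtain ⟨s, hs, rfl⟩ := hq
  have h₁ := hg.2.2.dist_of_le le_rfl hs.1 hs.2
  have h₂ := hg.2.2.dist_of_le hs.1 hs.2 le_rfl
  rw [hg.1] at h₁
  rw [hg.2.1] at h₂
  linarith

end IsGeodesicBetween

theorem GeodesicMetricSpace.exists_isGeodesicBetween (hX : GeodesicMetricSpace X) (x y : X) :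
    ∃ g, IsGeodesicBetween g x y :=
  hX x y

theorem GeodesicMetricSpace.joinedIn_closedBall (hX : GeodesicMetricSpace X) (x y : X) :
    JoinedIn (closedBall x (dist x y)) x y := by
  obtain ⟨g, hg⟩ := hX.exists_isGeodesicBetween x y
  refine hg.joinedIn_image.mono fun q hq => ?_
  rw [mem_closedBall, dist_comm, ← hg.dist_add_dist hq]
  exact le_add_of_nonneg_right dist_nonneg

theorem GeodesicMetricSpace.joinedIn_iUnion_closedBall_nat (hX : GeodesicMetricSpace X)
    {K : ℝ} (u : ℕ → X) (hu : ∀ i, dist (u i) (u (i + 1)) ≤ K) (n : ℕ) :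
    JoinedIn (⋃ i ∈ Iic n, closedBall (u i) K) (u 0) (u n) := by
  induction n with
  | zero =>
    exact JoinedIn.refl
      (mem_biUnion (mem_Iic.2 le_rfl) (mem_closedBall_self (dist_nonneg.trans (hu 0))))
  | succ n ih =>
    refine (ih.mono (biUnion_mono (Iic_subset_Iic.2 n.le_succ) fun _ _ => subset_rfl)).trans
      ((hX.joinedIn_closedBall _ _).mono ?_)
    exact (closedBall_subset_closedBall (hu n)).trans
      (subset_biUnion_of_mem (u := fun i => closedBall (u i) K) (mem_Iic.2 n.le_succ))

theorem GeodesicMetricSpace.joinedIn_iUnion_closedBall (hX : GeodesicMetricSpace X)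
    {φ : ℝ → X} {a b K : ℝ} (hab : a ≤ b)
    (hφ : ∀ s ∈ Icc a b, ∀ t ∈ Icc a b, |s - t| ≤ 1 → dist (φ s) (φ t) ≤ K) :
    JoinedIn (⋃ s ∈ Icc a b, closedBall (φ s) K) (φ a) (φ b) := by
  set c : ℕ → ℝ := fun i => min (a + i) b
  have hc : ∀ i, c i ∈ Icc a b := fun i =>
    ⟨le_min (le_add_of_nonneg_right i.cast_nonneg) hab, min_le_right _ _⟩
  have hstep : ∀ i, dist (φ (c i)) (φ (c (i + 1))) ≤ K := fun i => by
    refine hφ _ (hc i) _ (hc (i + 1)) ((abs_min_sub_min_le_max _ _ _ _).trans ?_)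
    simp
  have h0 : c 0 = a := by simp [c, hab]
  have hn : c ⌈b - a⌉₊ = b := min_eq_right (by linarith [Nat.le_ceil (b - a)])
  have := hX.joinedIn_iUnion_closedBall_nat _ hstep ⌈b - a⌉₊
  rw [h0, hn] at this
  exact this.mono (iUnion₂_subset fun i _ =>
    subset_biUnion_of_mem (u := fun s => closedBall (φ s) K) (hc i))

end Geodesics

theorem IsPreconnected.exists_dist_le_of_subset_union {Y : Type*} [MetricSpace Y]
    {K A B : Set Y} {r : ℝ} (hK : IsPreconnected K) (hA : IsCompact A) (hB : IsCompact B)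
    (hr : 0 ≤ r) (hKA : (K ∩ A).Nonempty) (hKB : (K ∩ B).Nonempty)
    (hcover : ∀ p ∈ K, ∃ q ∈ A ∪ B, dist p q ≤ r) :
    ∃ p ∈ K, (∃ a ∈ A, dist p a ≤ r) ∧ ∃ b ∈ B, dist p b ≤ r := by
  have hmem : ∀ {S : Set Y}, IsCompact S → ∀ p, p ∈ cthickening r S ↔ ∃ q ∈ S, dist p q ≤ r :=
    fun hS p => by simp [hS.cthickening_eq_biUnion_closedBall hr]
  obtain ⟨p, hpK, hpA, hpB⟩ := isPreconnected_closed_iff.1 hK _ _ isClosed_cthickening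
    isClosed_cthickening
    (fun p hp => by
      obtain ⟨q, hq | hq, hpq⟩ := hcover p hp
      exacts [Or.inl (mem_cthickening_of_dist_le p q r A hq hpq),
        Or.inr (mem_cthickening_of_dist_le p q r B hq hpq)])
    (hKA.mono (inter_subset_inter_right _ (self_subset_cthickening A)))
    (hKB.mono (inter_subset_inter_right _ (self_subset_cthickening B)))
  exact ⟨p, hpK, (hmem hA p).1 hpA, (hmem hB p).1 hpB⟩

def HasBottlenecks (T : Type*) [MetricSpace T] (Δ : ℝ) : Prop :=
  ∀ x y : T, ∃ m : T, dist x m = dist x y / 2 ∧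
    ∀ F : Set T, JoinedIn F x y → ∃ q ∈ F, dist q m ≤ Δ

section Bottleneck

variable {T : Type*} [MetricSpace T]

theorem BottleneckProperty.exists_hasBottlenecks (h : BottleneckProperty T) :
    ∃ Δ, 0 ≤ Δ ∧ HasBottlenecks T Δ := by
  obtain ⟨Δ, hΔ, hB⟩ := h
  refine ⟨Δ, hΔ.le, fun x y => ?_⟩
  obtain ⟨m, hm, -, hγ⟩ := hB x y
  refine ⟨m, hm, fun F ⟨γ, hγF⟩ => ?_⟩
  obtain ⟨t, -, ht⟩ := hγ γ.extend γ.continuous_extend.continuousOn γ.extend_zero γ.extend_one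
  obtain ⟨s, hs⟩ : γ.extend t ∈ range γ := γ.extend_range ▸ mem_range_self t
  exact ⟨γ.extend t, hs ▸ hγF s, ht⟩

variable {Δ : ℝ}

/-- For `s ≤ d / 2`, the bottleneck `m` of `[g 0, g (2 s)]` is `2Δ`-close to `g s`; the set
`F ∪ g '' [2 s, d]` also joins `g 0` to `g (2 s)`, so it passes `Δ`-close to `m`, and if it does
so on `g '' [2 s, d]` then `s ≤ 3Δ` and `g 0 ∈ F` will do. -/
theorem HasBottlenecks.exists_mem_dist_le (hB : HasBottlenecks T Δ) {g : ℝ → T} {d : ℝ}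
    (hg : IsGeodesicOn g d) {F : Set T} (hF : JoinedIn F (g 0) (g d)) {s : ℝ} (hs : s ∈ Icc 0 d) :
    ∃ q ∈ F, dist (g s) q ≤ 3 * Δ := by
  wlog h2s : 2 * s ≤ d generalizing g s
  · have hF' : JoinedIn F (g (d - 0)) (g (d - d)) := by simpa using hF.symm
    simpa using this hg.comp_sub hF' (s := d - s) ⟨by linarith [hs.2], by linarith [hs.1]⟩
      (by linarith)
  obtain ⟨m, hm, hmF⟩ := hB (g 0) (g (2 * s))
  rw [hg.dist_of_le le_rfl (by linarith [hs.1]) h2s] at hm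
  have hsm : dist (g s) m ≤ 2 * Δ := by
    obtain ⟨_, ⟨t, ht, rfl⟩, htm⟩ := hmF _ (hg.joinedIn_image le_rfl (by linarith [hs.1]) h2s)
    have h0t := hg.dist_of_le le_rfl ht.1 (ht.2.trans h2s)
    have hst : |s - t| ≤ Δ := abs_sub_le_iff.2 ⟨by linarith [dist_triangle (g 0) (g t) m],
      by linarith [dist_triangle (g 0) m (g t), dist_comm (g t) m]⟩
    calc dist (g s) m ≤ dist (g s) (g t) + dist (g t) m := dist_triangle _ _ _
      _ ≤ 2 * Δ := by rw [hg s hs t ⟨ht.1, ht.2.trans h2s⟩]; linarith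
  have hJ : JoinedIn (F ∪ g '' Icc (2 * s) d) (g 0) (g (2 * s)) :=
    (hF.mono subset_union_left).trans
      ((hg.joinedIn_image (by linarith [hs.1]) h2s le_rfl).symm.mono subset_union_right)
  obtain ⟨q, hq | ⟨t, ht, rfl⟩, hqm⟩ := hmF _ hJ
  · exact ⟨q, hq, by linarith [dist_triangle_right (g s) q m]⟩
  · have hst := hg.dist_of_le hs.1 (by linarith [ht.1, hs.1]) ht.2
    have h0s := hg.dist_of_le le_rfl hs.1 hs.2
    refine ⟨g 0, hF.mem.1, ?_⟩
    rw [dist_comm, h0s]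
    linarith [dist_triangle_right (g s) (g t) m, ht.1]

/-- On a geodesic `k` from `P` to `g 0`, every point is `3Δ`-close to `[P, g d] ∪ g '' [0, d]`,
so by connectedness some `k r` is `3Δ`-close to both; `k r` and its neighbour on `[P, g d]` are
in turn `3Δ`-close to `F₁` and to `F₂`. -/
theorem HasBottlenecks.exists_near_geodesic (hT : GeodesicMetricSpace T)
    (hB : HasBottlenecks T Δ) (hΔ : 0 ≤ Δ) {g : ℝ → T} {d : ℝ} (hg : IsGeodesicOn g d)
    (hd : 0 ≤ d) {P : T} {F₁ F₂ : Set T} (h₁ : JoinedIn F₁ (g 0) P) (h₂ : JoinedIn F₂ P (g d)) :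
    ∃ u ∈ F₁, ∃ v ∈ F₂, ∃ σ ∈ Icc 0 d, dist u v ≤ 9 * Δ ∧ dist u (g σ) ≤ 6 * Δ := by
  obtain ⟨k, hk⟩ := hT.exists_isGeodesicBetween P (g 0)
  obtain ⟨h, hh⟩ := hT.exists_isGeodesicBetween P (g d)
  have hJ : JoinedIn (h '' Icc 0 (dist P (g d)) ∪ g '' Icc 0 d) (k 0) (k (dist P (g 0))) := by
    rw [hk.1, hk.2.1]
    exact (hh.joinedIn_image.mono subset_union_left).trans
      ((hg.joinedIn_image le_rfl hd le_rfl).symm.mono subset_union_right)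
  obtain ⟨_, ⟨r, hr, rfl⟩, ⟨_, ⟨r', hr', rfl⟩, hr'r⟩, _, ⟨σ, hσ, rfl⟩, hrσ⟩ :=
    hk.isPreconnected_image.exists_dist_le_of_subset_union hh.isCompact_image
      (isCompact_Icc.image_of_continuousOn hg.continuousOn) (r := 3 * Δ) (by positivity)
      ⟨P, hk.left_mem_image, hh.left_mem_image⟩
      ⟨g 0, hk.right_mem_image, mem_image_of_mem g (left_mem_Icc.2 hd)⟩
      (by rintro _ ⟨r, hr, rfl⟩; exact hB.exists_mem_dist_le hk.2.2 hJ hr)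
  obtain ⟨u, hu, hru⟩ := hB.exists_mem_dist_le hk.2.2 (by rw [hk.1, hk.2.1]; exact h₁.symm) hr
  obtain ⟨v, hv, hr'v⟩ := hB.exists_mem_dist_le hh.2.2 (by rw [hh.1, hh.2.1]; exact h₂) hr'
  refine ⟨u, hu, v, hv, σ, hσ, ?_, ?_⟩
  · linarith [dist_triangle4 u (k r) (h r') v, dist_comm u (k r)]
  · linarith [dist_triangle u (k r) (g σ), dist_comm u (k r)]

end Bottleneck

def IsQuasiIsometricEmbedding {X T : Type*} [MetricSpace X] [MetricSpace T] (f : X → T)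
    (l C : ℝ) : Prop :=
  ∀ x x' : X, dist x x' / l - C ≤ dist (f x) (f x') ∧ dist (f x) (f x') ≤ l * dist x x' + C

def SlimTriangles (X : Type*) [MetricSpace X] (δ : ℝ) : Prop :=
  ∀ (x y z : X) (α β γ : ℝ → X), IsGeodesicBetween α x y → IsGeodesicBetween β x z →
    IsGeodesicBetween γ y z → ∀ p ∈ α '' Icc 0 (dist x y),
      ∃ q ∈ β '' Icc 0 (dist x z) ∪ γ '' Icc 0 (dist y z), dist p q ≤ δ

namespace IsQuasiIsometricEmbedding

variable {X T : Type*} [MetricSpace X] [MetricSpace T] {f : X → T} {l C : ℝ}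

theorem dist_le_mul (hf : IsQuasiIsometricEmbedding f l C) (hl : 0 < l) (x x' : X) :
    dist x x' ≤ l * (dist (f x) (f x') + C) := by
  rw [← div_le_iff₀' hl]
  linarith [(hf x x').1]

theorem dist_comp_le (hf : IsQuasiIsometricEmbedding f l C) {α : ℝ → X} {L s t : ℝ}
    (hα : IsGeodesicOn α L) (hs : s ∈ Icc 0 L) (ht : t ∈ Icc 0 L) :
    dist (f (α s)) (f (α t)) ≤ l * |s - t| + C :=
  hα s hs t ht ▸ (hf _ _).2

theorem joinedIn_comp (hf : IsQuasiIsometricEmbedding f l C) (hT : GeodesicMetricSpace T)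
    (hl : 0 ≤ l) {α : ℝ → X} {L a b : ℝ} (hα : IsGeodesicOn α L) (ha : 0 ≤ a) (hab : a ≤ b)
    (hb : b ≤ L) :
    JoinedIn (⋃ s ∈ Icc a b, closedBall (f (α s)) (l + C)) (f (α a)) (f (α b)) :=
  hT.joinedIn_iUnion_closedBall hab fun s hs t ht hst =>
    (hf.dist_comp_le hα ⟨ha.trans hs.1, hs.2.trans hb⟩ ⟨ha.trans ht.1, ht.2.trans hb⟩).trans
      (by linarith [mul_le_of_le_one_right hl hst])

variable {Δ : ℝ}

/-- Morse lemma. The point `f (α t)` is compared with the coarse paths `f ∘ α` on `[0, t]` and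
on `[t, L]`; nearby points `f (α s₁)`, `f (α s₂)` with `s₁ ≤ t ≤ s₂` force `s₂ - s₁`, hence
`t - s₁`, to be bounded. -/
theorem exists_dist_geodesic_le (hf : IsQuasiIsometricEmbedding f l C)
    (hT : GeodesicMetricSpace T) (hB : HasBottlenecks T Δ) (hΔ : 0 ≤ Δ) (hl : 0 < l) :
    ∃ M, ∀ (α : ℝ → X) (L : ℝ) (g : ℝ → T) (d : ℝ), IsGeodesicOn α L → IsGeodesicOn g d →
      0 ≤ d → g 0 = f (α 0) → g d = f (α L) →
      ∀ t ∈ Icc 0 L, ∃ σ ∈ Icc 0 d, dist (f (α t)) (g σ) ≤ M := by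
  refine ⟨l * (l * (9 * Δ + 2 * (l + C) + C)) + C + (l + C) + 6 * Δ, ?_⟩
  intro α L g d hα hg hd hg0 hgd t ht
  obtain ⟨u, hu, v, hv, σ, hσ, huv, huσ⟩ := hB.exists_near_geodesic hT hΔ hg hd
    (hg0 ▸ hf.joinedIn_comp hT hl.le hα le_rfl ht.1 ht.2)
    (hgd ▸ hf.joinedIn_comp hT hl.le hα ht.1 ht.2 le_rfl)
  simp only [mem_iUnion, mem_closedBall, exists_prop] at hu hv
  obtain ⟨s₁, hs₁, hus₁⟩ := hu
  obtain ⟨s₂, hs₂, hvs₂⟩ := hv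
  have hs : s₂ - s₁ ≤ l * (9 * Δ + 2 * (l + C) + C) := by
    have h := hf.dist_le_mul hl (α s₁) (α s₂)
    rw [hα.dist_of_le hs₁.1 (hs₁.2.trans hs₂.1) hs₂.2] at h
    refine h.trans (mul_le_mul_of_nonneg_left ?_ hl.le)
    linarith [dist_triangle4 (f (α s₁)) u v (f (α s₂)), dist_comm u (f (α s₁))]
  have ht₁ : dist (f (α t)) (f (α s₁)) ≤ l * (l * (9 * Δ + 2 * (l + C) + C)) + C := by
    have h := (hf (α t) (α s₁)).2
    rw [dist_comm (α t), hα.dist_of_le hs₁.1 hs₁.2 ht.2] at h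
    have hts : t - s₁ ≤ l * (9 * Δ + 2 * (l + C) + C) := by linarith [hs₂.1]
    linarith [mul_le_mul_of_nonneg_left hts hl.le]
  refine ⟨σ, hσ, ?_⟩
  linarith [dist_triangle4 (f (α t)) (f (α s₁)) u (g σ), dist_comm u (f (α s₁))]

theorem exists_slimTriangles (hf : IsQuasiIsometricEmbedding f l C)
    (hT : GeodesicMetricSpace T) (hB : HasBottlenecks T Δ) (hΔ : 0 ≤ Δ) (hl : 0 < l) :
    ∃ δ, 0 ≤ δ ∧ SlimTriangles X δ := by
  obtain ⟨M, hM⟩ := hf.exists_dist_geodesic_le hT hB hΔ hl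
  refine ⟨max (l * (M + 3 * Δ + (l + C) + C)) 0, le_max_right _ _, ?_⟩
  rintro x y z α β γ hα hβ hγ _ ⟨t, ht, rfl⟩
  obtain ⟨g, hg⟩ := hT.exists_isGeodesicBetween (f x) (f y)
  obtain ⟨σ, hσ, hσM⟩ := hM α _ g _ hα.2.2 hg.2.2 dist_nonneg (by rw [hg.1, hα.1])
    (by rw [hg.2.1, hα.2.1]) t ht
  have hβJ := hf.joinedIn_comp hT hl.le hβ.2.2 le_rfl dist_nonneg le_rfl
  have hγJ := hf.joinedIn_comp hT hl.le hγ.2.2 le_rfl dist_nonneg le_rfl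
  rw [hβ.1, hβ.2.1] at hβJ
  rw [hγ.1, hγ.2.1] at hγJ
  have hJ : JoinedIn ((⋃ s ∈ Icc 0 (dist x z), closedBall (f (β s)) (l + C)) ∪
      ⋃ s ∈ Icc 0 (dist y z), closedBall (f (γ s)) (l + C)) (g 0) (g (dist (f x) (f y))) := by
    rw [hg.1, hg.2.1]
    exact (hβJ.mono subset_union_left).trans (hγJ.symm.mono subset_union_right)
  obtain ⟨q, hq, hσq⟩ := hB.exists_mem_dist_le hg.2.2 hJ hσ
  have hpull : ∀ x', dist q (f x') ≤ l + C →
      dist (α t) x' ≤ max (l * (M + 3 * Δ + (l + C) + C)) 0 := fun x' h =>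
    ((hf.dist_le_mul hl _ _).trans (mul_le_mul_of_nonneg_left
      (by linarith [dist_triangle4 (f (α t)) (g σ) q (f x')]) hl.le)).trans (le_max_left _ _)
  simp only [mem_union, mem_iUnion, mem_closedBall, exists_prop] at hq
  rcases hq with ⟨s, hs, hqs⟩ | ⟨s, hs, hqs⟩
  · exact ⟨β s, Or.inl (mem_image_of_mem β hs), hpull _ hqs⟩
  · exact ⟨γ s, Or.inr (mem_image_of_mem γ hs), hpull _ hqs⟩

end IsQuasiIsometricEmbedding

section FourPoint

variable {X : Type*} [MetricSpace X] {δ : ℝ}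

theorem two_mul_dist_le_of_dist_le {x y w p a b : X} (hp : dist x p + dist p y = dist x y)
    (ha : dist x a + dist a w = dist x w) (hb : dist y b + dist b w = dist y w)
    (hpa : dist p a ≤ δ) (hpb : dist p b ≤ δ) :
    2 * dist w p ≤ dist x w + dist y w - dist x y + 4 * δ := by
  linarith [dist_triangle x a p, dist_triangle y b p, dist_triangle w a p, dist_triangle w b p,
    dist_comm a p, dist_comm b p, dist_comm a w, dist_comm b w, dist_comm y p]

theorem dist_add_dist_le_of_dist_le {x y z w p q : X} (hq : dist x q + dist q z = dist x z)
    (hpq : dist p q ≤ δ) (hw : 2 * dist w p ≤ dist x w + dist y w - dist x y + 4 * δ) :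
    dist x y + dist z w ≤ dist x z + dist y w + 2 * (3 * δ) := by
  linarith [dist_triangle4 z q p w, dist_triangle4 x q p w, dist_comm z q, dist_comm q p,
    dist_comm w p, dist_comm y w]

/-- A point `p` of `[x, y]` close to both `[x, w]` and `[y, w]` realises the Gromov product
`(x | y)_w` up to `2δ`, and `p` is close to `[x, z]` or to `[y, z]`. -/
theorem SlimTriangles.four_point (hX : GeodesicMetricSpace X) (hδ : SlimTriangles X δ)
    (hδ0 : 0 ≤ δ) (x y z w : X) :
    dist x y + dist z w ≤ max (dist x z + dist y w) (dist x w + dist y z) + 2 * (3 * δ) := by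
  obtain ⟨α, hα⟩ := hX.exists_isGeodesicBetween x y
  obtain ⟨β, hβ⟩ := hX.exists_isGeodesicBetween x z
  obtain ⟨γ, hγ⟩ := hX.exists_isGeodesicBetween y z
  obtain ⟨μ, hμ⟩ := hX.exists_isGeodesicBetween x w
  obtain ⟨ν, hν⟩ := hX.exists_isGeodesicBetween y w
  obtain ⟨p, hp, ⟨a, ha, hpa⟩, b, hb, hpb⟩ :=
    hα.isPreconnected_image.exists_dist_le_of_subset_union hμ.isCompact_image hν.isCompact_image
      hδ0 ⟨x, hα.left_mem_image, hμ.left_mem_image⟩ ⟨y, hα.right_mem_image, hν.left_mem_image⟩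
      (hδ x y w α μ ν hα hμ hν)
  have hw := two_mul_dist_le_of_dist_le (hα.dist_add_dist hp) (hμ.dist_add_dist ha)
    (hν.dist_add_dist hb) hpa hpb
  obtain ⟨q, hq | hq, hpq⟩ := hδ x y z α β γ hα hβ hγ p hp
  · linarith [dist_add_dist_le_of_dist_le (hβ.dist_add_dist hq) hpq hw,
      le_max_left (dist x z + dist y w) (dist x w + dist y z)]
  · have hw' : 2 * dist w p ≤ dist y w + dist x w - dist y x + 4 * δ := by
      rw [dist_comm y x]; linarith
    have := dist_add_dist_le_of_dist_le (hγ.dist_add_dist hq) hpq hw'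
    linarith [le_max_right (dist x z + dist y w) (dist x w + dist y z), dist_comm x y]

end FourPoint

theorem stmt16_general {X T : Type*} [MetricSpace X] [MetricSpace T]
    (hX : GeodesicMetricSpace X) (hT : GeodesicMetricSpace T)
    (hBN : BottleneckProperty T)
    (f : X → T) (l C : ℝ) (hl : 1 ≤ l)
    (hqi : ∀ x x' : X, dist x x' / l - C ≤ dist (f x) (f x') ∧
      dist (f x) (f x') ≤ l * dist x x' + C) :
    ∃ δ ≥ (0:ℝ), ∀ x y z w : X,
      dist x y + dist z w ≤ max (dist x z + dist y w) (dist x w + dist y z) + 2 * δ := by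
  obtain ⟨Δ, hΔ, hB⟩ := hBN.exists_hasBottlenecks
  obtain ⟨δ, hδ0, hδ⟩ := IsQuasiIsometricEmbedding.exists_slimTriangles hqi hT hB hΔ
    (by linarith)
  exact ⟨3 * δ, by positivity, hδ.four_point hX hδ0⟩

/-- A geodesic metric space quasi-isometric to a geodesic space with the
Bottleneck Property (in particular, to a simplicial tree) is Gromov `δ`-hyperbolic for
some `δ ≥ 0` (four-point condition). -/
theorem stmt16 {X T : Type*} [MetricSpace X] [MetricSpace T]
    (hX : GeodesicMetricSpace X) (hT : GeodesicMetricSpace T)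
    (hBN : BottleneckProperty T)
    (f : X → T) (l C D : ℝ) (hl : 1 ≤ l) (hC : 0 < C) (hD : 0 < D)
    (hqi : ∀ x x' : X, dist x x' / l - C ≤ dist (f x) (f x') ∧
      dist (f x) (f x') ≤ l * dist x x' + C)
    (hdense : ∀ t : T, ∃ x : X, dist (f x) t ≤ D) :
    ∃ δ ≥ (0:ℝ), ∀ x y z w : X,
      dist x y + dist z w ≤ max (dist x z + dist y w) (dist x w + dist y z) + 2 * δ :=
  stmt16_general hX hT hBN f l C hl hqi
end

section
/- Let Z be a metric space, 0 < r ≤ 1/6, and X = RH(Z) the Rips hyperbolic approximation with level function l. If there exists D > 0 such that for every k ∈ ℤ every connected component of the level-k subgraph l⁻¹(k) has diameter at most D (in the graph metric of X), then l : X → ℝ is metrically proper on the connected components: for every N > 0 there is M > 0 such that every connected component of l⁻¹([c − N, c + N]) has diameter at most M, for every c ∈ ℝ. -/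
/-- A chain of edges of `RH(Z)` staying inside a vertex subset `S`. -/
def ChainIn {Z : Type*} [MetricSpace Z] (r : ℝ) (S : Set (Z × ℤ)) (v w : Z × ℤ) : Prop :=
  ∃ (n : ℕ) (c : ℕ → Z × ℤ), c 0 = v ∧ c n = w ∧ (∀ i ≤ n, c i ∈ S) ∧
    ∀ i < n, c i = c (i + 1) ∨ RHAdj r (c i) (c (i + 1))

section

variable {Z : Type*} [MetricSpace Z] {r : ℝ}

namespace RHAdj

lemma project {v w : Z × ℤ} (h : RHAdj r v w) (hr : 0 < r) (hr1 : r ≤ 1) {k : ℤ}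
    (hv : k ≤ v.2) (hw : k ≤ w.2) : (v.1, k) = (w.1, k) ∨ RHAdj r (v.1, k) (w.1, k) := by
  obtain ⟨-, -, hdist⟩ := h
  by_cases hx : v.1 = w.1
  · exact Or.inl (by rw [hx])
  · refine Or.inr ⟨by simp [hx], by simp, ?_⟩
    calc dist v.1 w.1 ≤ r ^ min v.2 w.2 := hdist
      _ ≤ r ^ k := zpow_le_zpow_right_of_le_one₀ hr hr1 (le_min hv hw)
      _ = r ^ min k k := by rw [min_self]

end RHAdj

namespace ChainIn

variable {S : Set (Z × ℤ)} {v w : Z × ℤ}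

lemma mem_left (hc : ChainIn r S v w) : v ∈ S := by
  obtain ⟨n, c, rfl, -, hmem, -⟩ := hc
  exact hmem 0 n.zero_le

lemma mem_right (hc : ChainIn r S v w) : w ∈ S := by
  obtain ⟨n, c, -, rfl, hmem, -⟩ := hc
  exact hmem n le_rfl

lemma reachable (hc : ChainIn r S v w) : (RHGraph Z r).Reachable v w := by
  obtain ⟨n, c, rfl, rfl, -, hstep⟩ := hc
  induction n with
  | zero => rfl
  | succ m ih =>
    refine (ih fun i hi => hstep i (by omega)).trans ?_
    rcases hstep m m.lt_succ_self with heq | hadj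
    · rw [heq]
    · exact SimpleGraph.Adj.reachable (G := RHGraph Z r) hadj

lemma project (hc : ChainIn r S v w) (hr : 0 < r) (hr1 : r ≤ 1) {k : ℤ}
    (hS : ∀ u ∈ S, k ≤ u.2) : ChainIn r {u | u.2 = k} (v.1, k) (w.1, k) := by
  obtain ⟨n, c, rfl, rfl, hmem, hstep⟩ := hc
  refine ⟨n, fun i => ((c i).1, k), rfl, rfl, fun _ _ => rfl, fun i hi => ?_⟩
  rcases hstep i hi with heq | hadj
  · exact Or.inl (congrArg (fun u => (u.1, k)) heq)
  · exact hadj.project hr hr1 (hS _ (hmem i hi.le)) (hS _ (hmem (i + 1) hi))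

end ChainIn

namespace RHGraph

lemma adj_succ_self (hr : 0 < r) (x : Z) (k : ℤ) : (RHGraph Z r).Adj (x, k + 1) (x, k) :=
  ⟨by simp, by simp, by simpa using (zpow_pos hr _).le⟩

lemma exists_walk_vertical (hr : 0 < r) (x : Z) {k m : ℤ} (hkm : k ≤ m) :
    ∃ p : (RHGraph Z r).Walk (x, m) (x, k), (p.length : ℤ) = m - k := by
  induction m, hkm using Int.leInduction with
  | base => exact ⟨.nil, by simp⟩
  | succ m _ ih =>
    obtain ⟨p, hp⟩ := ih
    refine ⟨.cons (adj_succ_self hr x m) p, ?_⟩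
    push_cast [SimpleGraph.Walk.length_cons, hp]
    ring

lemma dist_le_of_chainIn (hr : 0 < r) (hr1 : r ≤ 1) {S : Set (Z × ℤ)} {k : ℤ}
    (hS : ∀ u ∈ S, k ≤ u.2) {v w : Z × ℤ} (hc : ChainIn r S v w) :
    ((RHGraph Z r).dist v w : ℤ) ≤
      (v.2 - k) + (RHGraph Z r).dist (v.1, k) (w.1, k) + (w.2 - k) := by
  obtain ⟨down, hdown⟩ := exists_walk_vertical hr v.1 (hS v hc.mem_left)
  obtain ⟨across, hacross⟩ := (hc.project hr hr1 hS).reachable.exists_walk_length_eq_dist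
  obtain ⟨up, hup⟩ := exists_walk_vertical hr w.1 (hS w hc.mem_right)
  have : (RHGraph Z r).dist v w ≤ _ :=
    SimpleGraph.dist_le ((down.append across).append up.reverse)
  simp only [SimpleGraph.Walk.length_append, SimpleGraph.Walk.length_reverse] at this
  omega

end RHGraph

end

theorem stmt17_general {Z : Type*} [MetricSpace Z] (r : ℝ) (hr : 0 < r) (hr6 : r ≤ 1 / 6)
    (D : ℕ)
    (h : ∀ (k : ℤ) (v w : Z × ℤ), ChainIn r {u : Z × ℤ | u.2 = k} v w →
      ((RHGraph Z r).dist v w : ℝ) ≤ D) :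
    ∀ N > (0:ℝ), ∃ M > (0:ℝ), ∀ (c : ℝ) (v w : Z × ℤ),
      ChainIn r {u : Z × ℤ | (u.2 : ℝ) ∈ Set.Icc (c - N) (c + N)} v w →
      ((RHGraph Z r).dist v w : ℝ) ≤ M := by
  intro N hN
  refine ⟨4 * N + D, by positivity, fun c v w hc => ?_⟩
  have hr1 : r ≤ 1 := by linarith
  set k := ⌈c - N⌉
  have hbottom : ∀ u ∈ {u : Z × ℤ | (u.2 : ℝ) ∈ Set.Icc (c - N) (c + N)}, k ≤ u.2 :=
    fun u hu => Int.ceil_le.2 hu.1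
  have hheight : ∀ u ∈ {u : Z × ℤ | (u.2 : ℝ) ∈ Set.Icc (c - N) (c + N)},
      ((u.2 - k : ℤ) : ℝ) ≤ 2 * N := fun u hu => by
    push_cast
    linarith [hu.2, Int.le_ceil (c - N)]
  have hpath : ((RHGraph Z r).dist v w : ℝ) ≤
      ((v.2 - k : ℤ) : ℝ) + (RHGraph Z r).dist (v.1, k) (w.1, k) + ((w.2 - k : ℤ) : ℝ) := by
    exact_mod_cast RHGraph.dist_le_of_chainIn hr hr1 hbottom hc
  linarith [h k _ _ (hc.project hr hr1 hbottom), hheight v hc.mem_left, hheight w hc.mem_right]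

/-- If every connected component of every level-`k` subgraph of `RH(Z)`
has diameter at most `D` in the graph metric of `RH(Z)`, then the level function is
metrically proper on the connected components: for every `N > 0` there is `M > 0`
bounding (in the graph metric) the diameter of every connected component of
`l⁻¹([c - N, c + N])` for every `c ∈ ℝ`. -/
theorem stmt17 {Z : Type*} [MetricSpace Z] (r : ℝ) (hr : 0 < r) (hr6 : r ≤ 1 / 6)
    (D : ℕ) (hD : 0 < D)
    (h : ∀ (k : ℤ) (v w : Z × ℤ), ChainIn r {u : Z × ℤ | u.2 = k} v w →
      ((RHGraph Z r).dist v w : ℝ) ≤ D) :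
    ∀ N > (0:ℝ), ∃ M > (0:ℝ), ∀ (c : ℝ) (v w : Z × ℤ),
      ChainIn r {u : Z × ℤ | (u.2 : ℝ) ∈ Set.Icc (c - N) (c + N)} v w →
      ((RHGraph Z r).dist v w : ℝ) ≤ M :=
  stmt17_general r hr hr6 D h
end

section
/- Let X be a graph with unit-length edges and f : |X| → ℝ a bornologous function with expansion function ρ_f satisfying ρ_f(1) < 1/4. Define f̃ on vertices by choosing f̃(x) ∈ (f(x) − 1/4, f(x) + 1/4) \ ℤ and extending affinely over edges. Then f̃ is within distance 1 of f pointwise on |X|: |f(p) − f̃(p)| < 1 for every point p of the geometric realization. -/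
/-- Let `|X|` be the geometric realization of a graph with unit edges
(modelled as a metric space `Y` with vertex set `V`, every point lying at parameter `t`
on an edge between two vertices), and `f : Y → ℝ` bornologous with expansion function
`ρ` satisfying `ρ(1) < 1/4`. If `f̃` takes on each vertex `x` a non-integer value in
`(f(x) - 1/4, f(x) + 1/4)` and is affine on edges, then `|f(p) − f̃(p)| < 1` for every
point `p`. -/
theorem stmt19 {Y : Type*} [MetricSpace Y] (V : Set Y) (f ftil : Y → ℝ)
    (ρ : ℝ → ℝ) (hmono : Monotone ρ)
    (hexp : ∀ p q : Y, |f p - f q| ≤ ρ (dist p q)) (hρ1 : ρ 1 < 1 / 4)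
    (hvert : ∀ x ∈ V, |ftil x - f x| < 1 / 4 ∧ ∀ n : ℤ, ftil x ≠ (n : ℝ))
    (hedge : ∀ p : Y, ∃ x₁ ∈ V, ∃ x₂ ∈ V, ∃ t ∈ Set.Icc (0:ℝ) 1,
      dist p x₁ = t ∧ dist p x₂ = 1 - t ∧ ftil p = (1 - t) * ftil x₁ + t * ftil x₂) :
    ∀ p : Y, |f p - ftil p| < 1 := by
  intro p
  obtain ⟨x₁, hx₁, x₂, hx₂, t, ⟨ht0, ht1⟩, hd₁, hd₂, hft⟩ := hedge p
  have key : ∀ x ∈ V, dist p x ≤ 1 → |f p - ftil x| < 1 / 2 := by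
    intro x hx hdx
    have h1 : |f p - f x| ≤ ρ 1 := le_trans (hexp p x) (hmono hdx)
    have h2 := (hvert x hx).1
    calc |f p - ftil x| = |(f p - f x) + (f x - ftil x)| := by ring_nf
      _ ≤ |f p - f x| + |f x - ftil x| := abs_add_le _ _
      _ = |f p - f x| + |ftil x - f x| := by rw [abs_sub_comm (f x)]
      _ < 1/4 + 1/4 := by linarith
      _ = 1/2 := by norm_num
  have k1 : |f p - ftil x₁| < 1/2 := key x₁ hx₁ (by rw [hd₁]; exact ht1)
  have k2 : |f p - ftil x₂| < 1/2 := key x₂ hx₂ (by rw [hd₂]; linarith)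
  have : f p - ftil p = (1 - t) * (f p - ftil x₁) + t * (f p - ftil x₂) := by
    rw [hft]; ring
  rw [this]
  calc |(1 - t) * (f p - ftil x₁) + t * (f p - ftil x₂)|
      ≤ |(1 - t) * (f p - ftil x₁)| + |t * (f p - ftil x₂)| := abs_add_le _ _
    _ = (1 - t) * |f p - ftil x₁| + t * |f p - ftil x₂| := by
        rw [abs_mul, abs_mul, abs_of_nonneg (by linarith : (0:ℝ) ≤ 1 - t),
          abs_of_nonneg ht0]
    _ < 1 := by nlinarith [abs_nonneg (f p - ftil x₁), abs_nonneg (f p - ftil x₂)]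
end
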